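/- Let G = (V,E) be a locally finite, simple, strongly connected directed d-regular graph satisfying condition (a): for every edge (x, y) ∈ E, Γ^out(x) ∩ Γ^out(y) = ∅. If G is Ricci-flat, then the out-degree d_u^out is the same for all vertices u of G. -/

import Mathlib

open Filter Set Topology

variable {V : Type*}

/-- The out-neighborhood of a vertex. -/
def outN (E : V → V → Prop) (x : V) : Set V := {y | E x y}

/-- The in-neighborhood of a vertex. -/
def inN (E : V → V → Prop) (x : V) : Set V := {y | E y x}

/-- The neighborhood `Γ(x) = Γ^in(x) ∪ Γ^out(x)` of a vertex. -/
def nbhd (E : V → V → Prop) (x : V) : Set V := inN E x ∪ outN E x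

/-- The degree `d_x = |Γ(x)|`. -/
noncomputable def deg (E : V → V → Prop) (x : V) : ℕ := (nbhd E x).ncard

/-- The out-degree `d_x^out = |Γ^out(x)|`. -/
noncomputable def outDeg (E : V → V → Prop) (x : V) : ℕ := (outN E x).ncard

/-- The in-degree `d_x^in = |Γ^in(x)|`. -/
noncomputable def inDeg (E : V → V → Prop) (x : V) : ℕ := (inN E x).ncard

/-- A directed graph is locally finite if every vertex has finite degree. -/
def LocFin (E : V → V → Prop) : Prop := ∀ x, (nbhd E x).Finite

/-- A directed graph (with edges given by a relation, hence no multi-edges) is simple when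
it has no loops. -/
def NoLoops (E : V → V → Prop) : Prop := ∀ x, ¬ E x x

/-- `f 0, f 1, …, f n` is a directed walk of length `n` (consecutive pairs are edges). -/
def IsDiWalk (E : V → V → Prop) (n : ℕ) (f : ℕ → V) : Prop := ∀ i, i < n → E (f i) (f (i + 1))

/-- A directed graph is strongly connected if for any two vertices there exists a
directed path (of length at least one) from one to the other. -/
def StronglyConnected (E : V → V → Prop) : Prop :=
  ∀ x y : V, ∃ n, 1 ≤ n ∧ ∃ f : ℕ → V, f 0 = x ∧ f n = y ∧ IsDiWalk E n f

/-- The distance `d(x,y)`: the length of a shortest directed path from `x` to `y`. -/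
noncomputable def ddist (E : V → V → Prop) (x y : V) : ℕ :=
  sInf {n : ℕ | ∃ f : ℕ → V, f 0 = x ∧ f n = y ∧ IsDiWalk E n f}

open Classical in
/-- The probability measure `m_x^α`. -/
noncomputable def mAlpha (E : V → V → Prop) (α : ℝ) (x : V) : V → ℝ := fun v =>
  if v = x then α + (1 - α) * (inDeg E x : ℝ) / (deg E x : ℝ)
  else if E x v then (1 - α) / (deg E x : ℝ)
  else 0

/-- A coupling between `m_x^α` and `m_y^α`: a map `A : V × V → [0,1]` (of finite support)
whose marginals are `m_x^α` and `m_y^α`. -/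
def IsCoupling (E : V → V → Prop) (α : ℝ) (x y : V) (A : V → V → ℝ) : Prop :=
  (Function.support fun p : V × V => A p.1 p.2).Finite ∧
  (∀ u v, A u v ∈ Set.Icc (0 : ℝ) 1) ∧
  (∀ u, ∑ᶠ v, A u v = mAlpha E α x u) ∧
  (∀ v, ∑ᶠ u, A u v = mAlpha E α y v)

/-- The 1-Wasserstein distance `W(m_x^α, m_y^α)`. -/
noncomputable def Wass (E : V → V → Prop) (α : ℝ) (x y : V) : ℝ :=
  sInf {w : ℝ | ∃ A : V → V → ℝ, IsCoupling E α x y A ∧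
    w = ∑ᶠ u, ∑ᶠ v, A u v * (ddist E u v : ℝ)}

/-- The α-Ricci curvature `κ_α(x,y) = 1 − W(m_x^α, m_y^α)/d(x,y)`. -/
noncomputable def ricciAlpha (E : V → V → Prop) (α : ℝ) (x y : V) : ℝ :=
  1 - Wass E α x y / (ddist E x y : ℝ)

/-- `RicciTendsto E x y k` means the Ricci curvature `κ(x,y) = lim_{α→1} κ_α(x,y)/(1−α)`
exists and equals `k`. -/
def RicciTendsto (E : V → V → Prop) (x y : V) (k : ℝ) : Prop :=
  Tendsto (fun α : ℝ => ricciAlpha E α x y / (1 - α)) (𝓝[<] (1 : ℝ)) (𝓝 k)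

/-- A directed graph is Ricci-flat if `κ(x,y) = 0` for every edge `(x,y)`. -/
def RicciFlat (E : V → V → Prop) : Prop := ∀ x y : V, E x y → RicciTendsto E x y 0

/-!
Testing the transport cost against `1`-Lipschitz functions `φ` (the easy half of Kantorovich
duality) and letting `α → 1`, flatness of an edge `(x,y)` becomes the linear inequality
`φ(x) d_x^in - φ(y) d_y^in + ∑_{Γ^out(x)} φ - ∑_{Γ^out(y)} φ ≤ d` whenever `φ(x) = φ(y) + 1`.
Since `m_x^α` has mass `α + (1-α)(d_x^in + d_x^out)/d`, the mere existence of couplings forces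
`d^in + d^out = d + r` to be constant, where `r` is the number of reciprocal neighbours.
If every edge is reciprocal then `d^out = d`. Otherwise three test functions finish the proof:
they give `r ≤ 1`; for `r = 0` the in-degree increases along edges, hence is constant; for `r = 1`
a vertex of maximal in-degree has a single out-neighbour, and following out-neighbours from it
leads to a contradiction.
-/

section Degrees

variable {E : V → V → Prop}

@[simp]
lemma mem_outN {x v : V} : v ∈ outN E x ↔ E x v := Iff.rfl

@[simp]
lemma mem_inN {x v : V} : v ∈ inN E x ↔ E v x := Iff.rfl

lemma outN_finite (hlf : LocFin E) (x : V) : (outN E x).Finite :=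
  (hlf x).subset subset_union_right

lemma inDeg_le_deg (hlf : LocFin E) (x : V) : inDeg E x ≤ deg E x :=
  ncard_le_ncard subset_union_left (hlf x)

lemma outDeg_le_deg (hlf : LocFin E) (x : V) : outDeg E x ≤ deg E x :=
  ncard_le_ncard subset_union_right (hlf x)

lemma outDeg_pos_of_edge (hlf : LocFin E) {x y : V} (hxy : E x y) : 0 < outDeg E x :=
  (ncard_pos (outN_finite hlf x)).2 ⟨y, hxy⟩

lemma deg_pos_of_edge (hlf : LocFin E) {x y : V} (hxy : E x y) : 0 < deg E x :=
  (outDeg_pos_of_edge hlf hxy).trans_le (outDeg_le_deg hlf x)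

lemma ne_of_edge (hs : NoLoops E) {x y : V} (hxy : E x y) : x ≠ y :=
  fun h => hs x (h ▸ hxy)

lemma not_edge_of_inter_outN_eq_empty {x y v : V} (hdisj : outN E x ∩ outN E y = ∅)
    (hxv : E x v) : ¬E y v :=
  fun hyv => (hdisj.subset ⟨hxv, hyv⟩ : v ∈ (∅ : Set V))

def recipN (E : V → V → Prop) (x : V) : Set V := inN E x ∩ outN E x

noncomputable def recipDeg (E : V → V → Prop) (x : V) : ℕ := (recipN E x).ncard

lemma deg_add_recipDeg (hlf : LocFin E) (x : V) :
    deg E x + recipDeg E x = inDeg E x + outDeg E x :=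
  ncard_union_add_ncard_inter _ _ ((hlf x).subset subset_union_left) (outN_finite hlf x)

lemma outDeg_eq_deg_of_symm (hsymm : ∀ a b, E a b → E b a) (x : V) : outDeg E x = deg E x := by
  rw [outDeg, deg, nbhd,
    union_eq_self_of_subset_left (s := inN E x) (t := outN E x) fun z hz => hsymm z x hz]

end Degrees

namespace StronglyConnected

variable {E : V → V → Prop}

lemma reflTransGen (hsc : StronglyConnected E) (x y : V) : Relation.ReflTransGen E x y := by
  obtain ⟨n, -, f, rfl, rfl, hf⟩ := hsc x y
  have key : ∀ i ≤ n, Relation.ReflTransGen E (f 0) (f i) := by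
    intro i hi
    induction i with
    | zero => exact .refl
    | succ i ih => exact (ih (by omega)).tail (hf i (by omega))
  exact key n le_rfl

lemma exists_edge (hsc : StronglyConnected E) (x : V) : ∃ y, E x y := by
  obtain ⟨n, hn, f, h0, -, hf⟩ := hsc x x
  exact ⟨f 1, h0 ▸ hf 0 hn⟩

lemma mem_of_outN_subset (hsc : StronglyConnected E) {s : Set V}
    (hs : ∀ a ∈ s, outN E a ⊆ s) {x : V} (hx : x ∈ s) (y : V) : y ∈ s := by
  induction hsc.reflTransGen x y with
  | refl => exact hx
  | tail _ hbc ih => exact hs _ ih hbc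

lemma le_of_forall_edge {α : Type*} [Preorder α] (hsc : StronglyConnected E) {g : V → α}
    (hg : ∀ a b, E a b → g a ≤ g b) (x y : V) : g x ≤ g y := by
  induction hsc.reflTransGen x y with
  | refl => exact le_rfl
  | tail _ hbc ih => exact ih.trans (hg _ _ hbc)

lemma eq_of_forall_edge {α : Type*} [PartialOrder α] (hsc : StronglyConnected E) {g : V → α}
    (hg : ∀ a b, E a b → g a ≤ g b) (x y : V) : g x = g y :=
  (hsc.le_of_forall_edge hg x y).antisymm (hsc.le_of_forall_edge hg y x)

lemma exists_walk_ddist (hsc : StronglyConnected E) (x y : V) :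
    ∃ f : ℕ → V, f 0 = x ∧ f (ddist E x y) = y ∧ IsDiWalk E (ddist E x y) f := by
  obtain ⟨n, -, f, hf⟩ := hsc x y
  exact Nat.sInf_mem (s := {n | ∃ f : ℕ → V, f 0 = x ∧ f n = y ∧ IsDiWalk E n f}) ⟨n, f, hf⟩

lemma one_le_ddist (hsc : StronglyConnected E) {x y : V} (hxy : x ≠ y) : 1 ≤ ddist E x y := by
  obtain ⟨f, h0, hd, -⟩ := hsc.exists_walk_ddist x y
  by_contra! h
  rw [Nat.lt_one_iff.1 h, h0] at hd
  exact hxy hd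

lemma two_le_ddist (hsc : StronglyConnected E) {x y : V} (hxy : x ≠ y) (hnot : ¬E x y) :
    2 ≤ ddist E x y := by
  obtain ⟨f, h0, hd, hf⟩ := hsc.exists_walk_ddist x y
  by_contra! h
  have h1 : ddist E x y = 1 := by have := hsc.one_le_ddist hxy; omega
  rw [h1] at hd hf
  exact hnot (h0 ▸ hd ▸ hf 0 one_pos)

lemma ddist_eq_one (hsc : StronglyConnected E) (hs : NoLoops E) {x y : V} (hxy : E x y) :
    ddist E x y = 1 :=
  (Nat.sInf_le (s := {n | ∃ f : ℕ → V, f 0 = x ∧ f n = y ∧ IsDiWalk E n f})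
    ⟨fun i => if i = 0 then x else y, rfl, rfl, fun i hi => by
      simpa [Nat.lt_one_iff.1 hi] using hxy⟩).antisymm (hsc.one_le_ddist (ne_of_edge hs hxy))

lemma sub_le_ddist (hsc : StronglyConnected E) {φ : V → ℝ} (h2 : ∀ u v, φ u - φ v ≤ 2)
    (h1 : ∀ u v, E u v → φ u - φ v ≤ 1) (u v : V) : φ u - φ v ≤ ddist E u v := by
  rcases eq_or_ne u v with rfl | huv
  · simp
  by_cases huv' : E u v
  · exact (h1 u v huv').trans (by exact_mod_cast hsc.one_le_ddist huv)
  · exact (h2 u v).trans (by exact_mod_cast hsc.two_le_ddist huv huv')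

end StronglyConnected

section Transport

open scoped Classical

variable {E : V → V → Prop}

lemma finsum_mem_outN_const (hlf : LocFin E) (x : V) (c : ℝ) :
    ∑ᶠ v ∈ outN E x, c = c * outDeg E x := by
  rw [finsum_mem_eq_finite_toFinset_sum _ (outN_finite hlf x), Finset.sum_const, nsmul_eq_mul,
    outDeg, ncard_eq_toFinset_card _ (outN_finite hlf x), mul_comm]

lemma finsum_mem_outN_ite (hlf : LocFin E) (x a : V) (p q : ℝ) :
    ∑ᶠ v ∈ outN E x, (if v = a then p else q) = q * outDeg E x + if E x a then p - q else 0 := by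
  have hsplit : ∀ v, (if v = a then p else q) = q + if v = a then p - q else 0 := by
    intro v; split_ifs <;> ring
  simp only [hsplit, finsum_mem_add_distrib (outN_finite hlf x), finsum_mem_outN_const hlf,
    finsum_mem_eq_finite_toFinset_sum _ (outN_finite hlf x), Finset.sum_ite_eq',
    Finite.mem_toFinset]
  rfl

lemma mAlpha_nonneg {α : ℝ} (h0 : 0 ≤ α) (h1 : α ≤ 1) (x v : V) : 0 ≤ mAlpha E α x v := by
  have : 0 ≤ 1 - α := by linarith
  unfold mAlpha
  split_ifs
  · exact add_nonneg h0 (div_nonneg (mul_nonneg this (Nat.cast_nonneg _)) (Nat.cast_nonneg _))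
  · exact div_nonneg this (Nat.cast_nonneg _)
  · exact le_rfl

lemma mAlpha_le_one (hlf : LocFin E) {α : ℝ} (h0 : 0 ≤ α) (h1 : α ≤ 1) (x v : V) :
    mAlpha E α x v ≤ 1 := by
  unfold mAlpha
  split_ifs with hvx hxv
  · have : (inDeg E x : ℝ) / deg E x ≤ 1 :=
      div_le_one_of_le₀ (by exact_mod_cast inDeg_le_deg hlf x) (Nat.cast_nonneg _)
    rw [mul_div_assoc]
    nlinarith
  · have : (1 : ℝ) ≤ deg E x := by exact_mod_cast deg_pos_of_edge hlf hxv
    rw [div_le_one (by linarith)]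
    linarith
  · exact zero_le_one

lemma support_mAlpha_subset (α : ℝ) (x : V) :
    Function.support (mAlpha E α x) ⊆ insert x (outN E x) := by
  intro v hv
  by_contra hmem
  simp only [mem_insert_iff, not_or] at hmem
  exact hv (by simp [mAlpha, hmem.1, show ¬E x v from hmem.2])

lemma finsum_mul_mAlpha (hlf : LocFin E) (hs : NoLoops E) (α : ℝ) (x : V) (φ : V → ℝ) :
    ∑ᶠ v, φ v * mAlpha E α x v =
      φ x * (α + (1 - α) * inDeg E x / deg E x) + (1 - α) / deg E x * ∑ᶠ v ∈ outN E x, φ v := by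
  have hx : x ∉ (outN_finite hlf x).toFinset := by simpa using hs x
  have hsupp : Function.support (fun v => φ v * mAlpha E α x v) ⊆
      ↑(insert x (outN_finite hlf x).toFinset) := fun v hv => by
    simpa using support_mAlpha_subset α x (right_ne_zero_of_mul hv)
  rw [finsum_eq_sum_of_support_subset _ hsupp, Finset.sum_insert hx,
    finsum_mem_eq_finite_toFinset_sum _ (outN_finite hlf x), Finset.mul_sum]
  congr 1
  · simp [mAlpha]
  · refine Finset.sum_congr rfl fun v hv => ?_
    rw [Finite.mem_toFinset] at hv
    simp [mAlpha, (ne_of_edge hs hv).symm, show E x v from hv, mul_comm]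

lemma finsum_mAlpha (hlf : LocFin E) (hs : NoLoops E) (α : ℝ) (x : V) :
    ∑ᶠ v, mAlpha E α x v = α + (1 - α) * (inDeg E x + outDeg E x) / deg E x := by
  have h := finsum_mul_mAlpha hlf hs α x 1
  simp only [Pi.one_apply, one_mul, finsum_mem_outN_const hlf] at h
  rw [h]
  ring

end Transport

section Coupling

variable {E : V → V → Prop} {α : ℝ} {x y : V} {A : V → V → ℝ}

lemma finsum_finsum_eq_sum_sum {U : Finset V} (hU : ∀ u v, A u v ≠ 0 → u ∈ U ∧ v ∈ U)
    (c : V → V → ℝ) : ∑ᶠ u, ∑ᶠ v, A u v * c u v = ∑ u ∈ U, ∑ v ∈ U, A u v * c u v := by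
  have hrow : ∀ u, ∑ᶠ v, A u v * c u v = ∑ v ∈ U, A u v * c u v := fun u =>
    finsum_eq_sum_of_support_subset _ fun v hv => (hU u v (left_ne_zero_of_mul hv)).2
  simp_rw [hrow]
  refine finsum_eq_sum_of_support_subset _ fun u hu => ?_
  obtain ⟨v, -, hv⟩ := Finset.exists_ne_zero_of_sum_ne_zero hu
  exact (hU u v (left_ne_zero_of_mul hv)).1

namespace IsCoupling

lemma exists_finset (hA : IsCoupling E α x y A) :
    ∃ U : Finset V, ∀ u v, A u v ≠ 0 → u ∈ U ∧ v ∈ U := by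
  classical
  refine ⟨hA.1.toFinset.image Prod.fst ∪ hA.1.toFinset.image Prod.snd, fun u v huv => ?_⟩
  have hmem : (u, v) ∈ hA.1.toFinset := by simpa using huv
  exact ⟨Finset.mem_union_left _ (Finset.mem_image_of_mem _ hmem),
    Finset.mem_union_right _ (Finset.mem_image_of_mem _ hmem)⟩

variable {U : Finset V}

lemma finsum_mul_mAlpha_left (hA : IsCoupling E α x y A)
    (hU : ∀ u v, A u v ≠ 0 → u ∈ U ∧ v ∈ U) (f : V → ℝ) :
    ∑ᶠ u, f u * mAlpha E α x u = ∑ u ∈ U, ∑ v ∈ U, A u v * f u := by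
  have hrow : ∀ u, mAlpha E α x u = ∑ v ∈ U, A u v := fun u =>
    hA.2.2.1 u ▸ finsum_eq_sum_of_support_subset _ fun v hv => (hU u v hv).2
  rw [finsum_eq_sum_of_support_subset _ (s := U) fun u hu => ?_]
  · simp_rw [hrow, Finset.mul_sum, mul_comm]
  obtain ⟨v, -, hv⟩ := Finset.exists_ne_zero_of_sum_ne_zero (hrow u ▸ right_ne_zero_of_mul hu)
  exact (hU u v hv).1

lemma finsum_mul_mAlpha_right (hA : IsCoupling E α x y A)
    (hU : ∀ u v, A u v ≠ 0 → u ∈ U ∧ v ∈ U) (f : V → ℝ) :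
    ∑ᶠ v, f v * mAlpha E α y v = ∑ u ∈ U, ∑ v ∈ U, A u v * f v := by
  have hcol : ∀ v, mAlpha E α y v = ∑ u ∈ U, A u v := fun v =>
    hA.2.2.2 v ▸ finsum_eq_sum_of_support_subset _ fun u hu => (hU u v hu).1
  rw [finsum_eq_sum_of_support_subset _ (s := U) fun v hv => ?_, Finset.sum_comm]
  · simp_rw [hcol, Finset.mul_sum, mul_comm]
  obtain ⟨u, -, hu⟩ := Finset.exists_ne_zero_of_sum_ne_zero (hcol v ▸ right_ne_zero_of_mul hv)
  exact (hU u v hu).2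

lemma finsum_mAlpha_eq (hA : IsCoupling E α x y A) :
    ∑ᶠ u, mAlpha E α x u = ∑ᶠ v, mAlpha E α y v := by
  obtain ⟨U, hU⟩ := hA.exists_finset
  have hx := hA.finsum_mul_mAlpha_left hU 1
  have hy := hA.finsum_mul_mAlpha_right hU 1
  simp only [Pi.one_apply, one_mul, mul_one] at hx hy
  rw [hx, hy]

/-- Weak Kantorovich duality. -/
lemma sub_le_cost (hA : IsCoupling E α x y A) (φ : V → ℝ)
    (hφ : ∀ u v, φ u - φ v ≤ ddist E u v) :
    ∑ᶠ u, φ u * mAlpha E α x u - ∑ᶠ v, φ v * mAlpha E α y v ≤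
      ∑ᶠ u, ∑ᶠ v, A u v * (ddist E u v : ℝ) := by
  obtain ⟨U, hU⟩ := hA.exists_finset
  rw [hA.finsum_mul_mAlpha_left hU, hA.finsum_mul_mAlpha_right hU, finsum_finsum_eq_sum_sum hU,
    ← Finset.sum_sub_distrib]
  refine Finset.sum_le_sum fun u _ => ?_
  rw [← Finset.sum_sub_distrib]
  refine Finset.sum_le_sum fun v _ => ?_
  rw [← mul_sub]
  exact mul_le_mul_of_nonneg_left (hφ u v) (hA.2.1 u v).1

end IsCoupling

lemma sub_le_Wass (h : ∃ A, IsCoupling E α x y A) (φ : V → ℝ)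
    (hφ : ∀ u v, φ u - φ v ≤ ddist E u v) :
    ∑ᶠ u, φ u * mAlpha E α x u - ∑ᶠ v, φ v * mAlpha E α y v ≤ Wass E α x y := by
  obtain ⟨A, hA⟩ := h
  exact le_csInf ⟨_, A, hA, rfl⟩ (by rintro w ⟨B, hB, rfl⟩; exact hB.sub_le_cost φ hφ)

lemma Wass_eq_zero_of_forall_not_isCoupling (h : ∀ A, ¬IsCoupling E α x y A) :
    Wass E α x y = 0 := by
  rw [Wass, eq_empty_of_forall_notMem fun w (hw : w ∈ {w | _}) => h _ hw.choose_spec.1,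
    Real.sInf_empty]

/-- The witness is the normalized product `m_x^α(u) m_y^α(v) / ∑ m_x^α`. -/
lemma exists_isCoupling (hlf : LocFin E) (h0 : 0 < α) (h1 : α ≤ 1)
    (hmass : ∑ᶠ u, mAlpha E α x u = ∑ᶠ v, mAlpha E α y v) : ∃ A, IsCoupling E α x y A := by
  set M := ∑ᶠ u, mAlpha E α x u
  have hfin : ∀ z, (Function.support (mAlpha E α z)).Finite := fun z =>
    ((outN_finite hlf z).insert z).subset (support_mAlpha_subset α z)
  have hnn := mAlpha_nonneg (E := E) h0.le h1
  have hle : ∀ u, mAlpha E α x u ≤ M := fun u => single_le_finsum u (hfin x) (hnn x)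
  have hself : α ≤ mAlpha E α x x := by
    have : 0 ≤ (1 - α) * inDeg E x / deg E x := by
      have : 0 ≤ 1 - α := by linarith
      positivity
    simp only [mAlpha, if_true]
    linarith
  have hM : 0 < M := h0.trans_le (hself.trans (hle x))
  refine ⟨fun u v => mAlpha E α x u * mAlpha E α y v / M, ?_, fun u v => ⟨?_, ?_⟩,
    fun u => ?_, fun v => ?_⟩
  · refine ((hfin x).prod (hfin y)).subset fun p hp => ?_
    simp only [Function.mem_support, ne_eq, div_eq_zero_iff, mul_eq_zero, not_or] at hp
    exact ⟨hp.1.1, hp.1.2⟩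
  · exact div_nonneg (mul_nonneg (hnn x u) (hnn y v)) hM.le
  · rw [div_le_one hM]
    exact (mul_le_mul (hle u) (mAlpha_le_one hlf h0.le h1 y v) (hnn y v) hM.le).trans_eq
      (mul_one M)
  · simp_rw [mul_div_right_comm _ _ M, ← mul_finsum, ← hmass, div_mul_cancel₀ _ hM.ne']
  · simp_rw [mul_div_assoc, ← finsum_mul]
    exact mul_div_cancel₀ _ hM.ne'

end Coupling

section Curvature

variable {E : V → V → Prop} {x y : V}

lemma inDeg_add_outDeg_eq_of_ricciTendsto (hlf : LocFin E) (hs : NoLoops E) (hxy : E x y)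
    (hdeg : deg E x = deg E y) (hflat : RicciTendsto E x y 0) :
    inDeg E x + outDeg E x = inDeg E y + outDeg E y := by
  by_contra hne
  have hD : (0 : ℝ) < deg E x := by exact_mod_cast deg_pos_of_edge hlf hxy
  -- Masses of different size admit no coupling, so `W = sInf ∅ = 0` and `κ_α = 1`.
  have hge : ∀ᶠ α in 𝓝[<] (1 : ℝ), 1 ≤ ricciAlpha E α x y / (1 - α) := by
    filter_upwards [Ioo_mem_nhdsLT zero_lt_one] with α ⟨h0, h1⟩
    have hW : Wass E α x y = 0 := Wass_eq_zero_of_forall_not_isCoupling fun A hA => hne <| by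
      have hm := hA.finsum_mAlpha_eq
      rw [finsum_mAlpha hlf hs, finsum_mAlpha hlf hs, ← hdeg, add_right_inj,
        div_left_inj' hD.ne', mul_right_inj' (by linarith)] at hm
      exact_mod_cast hm
    rw [ricciAlpha, hW, zero_div, sub_zero, le_div_iff₀ (by linarith)]
    linarith
  linarith [ge_of_tendsto hflat hge]

/-- Writing `K` for the left-hand side, `∑ φ dm_x^α - ∑ φ dm_y^α = α + (1 - α) K / deg x`
bounds `W(m_x^α, m_y^α)` from below, and `κ_α(x,y) = o(1 - α)` then forces `K ≤ deg x`. -/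
lemma le_deg_of_ricciTendsto (hlf : LocFin E) (hs : NoLoops E) (hsc : StronglyConnected E)
    (hxy : E x y) (hdeg : deg E x = deg E y) (hflat : RicciTendsto E x y 0) (φ : V → ℝ)
    (hφ : ∀ u v, φ u - φ v ≤ ddist E u v) (hφxy : φ x = φ y + 1) :
    φ x * inDeg E x - φ y * inDeg E y + ∑ᶠ v ∈ outN E x, φ v - ∑ᶠ v ∈ outN E y, φ v
      ≤ deg E x := by
  have hS := inDeg_add_outDeg_eq_of_ricciTendsto hlf hs hxy hdeg hflat
  set K := φ x * inDeg E x - φ y * inDeg E y + ∑ᶠ v ∈ outN E x, φ v - ∑ᶠ v ∈ outN E y, φ v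
    with hK
  have hD : (0 : ℝ) < deg E x := by exact_mod_cast deg_pos_of_edge hlf hxy
  have hle : ∀ᶠ α in 𝓝[<] (1 : ℝ), ricciAlpha E α x y / (1 - α) ≤ 1 - K / deg E x := by
    filter_upwards [Ioo_mem_nhdsLT zero_lt_one] with α ⟨h0, h1⟩
    have hmass : ∑ᶠ u, mAlpha E α x u = ∑ᶠ v, mAlpha E α y v := by
      rw [finsum_mAlpha hlf hs, finsum_mAlpha hlf hs, ← hdeg, ← Nat.cast_add, ← Nat.cast_add, hS]
    have hW := sub_le_Wass (exists_isCoupling hlf h0 h1.le hmass) φ hφ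
    have hW' : α + (1 - α) * K / deg E x ≤ Wass E α x y := by
      convert hW using 1
      rw [finsum_mul_mAlpha hlf hs, finsum_mul_mAlpha hlf hs, ← hdeg, hK, hφxy]
      field_simp
      ring
    rw [ricciAlpha, hsc.ddist_eq_one hs hxy, Nat.cast_one, div_one, div_le_iff₀ (by linarith)]
    have : (1 - K / deg E x) * (1 - α) = 1 - α - (1 - α) * K / deg E x := by ring
    linarith
  have h0 := le_of_tendsto hflat hle
  rwa [sub_nonneg, div_le_one hD] at h0

end Curvature

section TestFunctions

variable {E : V → V → Prop} {x y : V}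

open Classical in
lemma inDeg_add_outDeg_le_of_edge (hlf : LocFin E) (hs : NoLoops E) (hsc : StronglyConnected E)
    (hxy : E x y) (hdeg : deg E x = deg E y) (hdisj : outN E x ∩ outN E y = ∅)
    (hflat : RicciTendsto E x y 0) :
    inDeg E x + outDeg E y ≤ deg E x + if E y x then 2 else 0 := by
  set φ : V → ℝ := fun u => if u = x then 1 else if E y u then -1 else 0 with hφ
  have hφ_le : ∀ u, φ u ≤ 1 := fun u => by simp only [hφ]; split_ifs <;> norm_num
  have hφ_ge : ∀ u, -1 ≤ φ u := fun u => by simp only [hφ]; split_ifs <;> norm_num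
  have hlip : ∀ u v, E u v → φ u - φ v ≤ 1 := by
    intro u v huv
    by_cases hux : u = x
    · subst hux
      have hyv := not_edge_of_inter_outN_eq_empty hdisj huv
      simp [hφ, (ne_of_edge hs huv).symm, hyv]
    · have : φ u ≤ 0 := by simp only [hφ, if_neg hux]; split_ifs <;> norm_num
      linarith [hφ_ge v]
  have hout_x : ∑ᶠ v ∈ outN E x, φ v = 0 := finsum_mem_eq_zero_of_forall_eq_zero fun v hv => by
    simp [hφ, (ne_of_edge hs hv).symm, not_edge_of_inter_outN_eq_empty hdisj hv]
  have hout_y : ∑ᶠ v ∈ outN E y, φ v = -outDeg E y + if E y x then 2 else 0 := by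
    rw [finsum_mem_congr rfl fun v hv => show φ v = if v = x then 1 else -1 by
      simp [hφ, mem_outN.1 hv], finsum_mem_outN_ite hlf]
    norm_num
  have hφx : φ x = 1 := if_pos rfl
  have hφy : φ y = 0 := by simp [hφ, (ne_of_edge hs hxy).symm, hs y]
  have h := le_deg_of_ricciTendsto hlf hs hsc hxy hdeg hflat φ
    (hsc.sub_le_ddist (fun u v => by linarith [hφ_le u, hφ_ge v]) hlip) (by simp [hφx, hφy])
  rw [hφx, hφy, hout_x, hout_y] at h
  rify
  split_ifs at h ⊢ <;> push_cast <;> linarith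

lemma inDeg_add_outDeg_le_succ_of_not_edge (hlf : LocFin E) (hs : NoLoops E)
    (hsc : StronglyConnected E) (hxy : E x y) (hyx : ¬E y x) (hdeg : deg E x = deg E y)
    (hdisj : outN E x ∩ outN E y = ∅) (hflat : RicciTendsto E x y 0) :
    inDeg E x + outDeg E x ≤ deg E x + 1 := by
  classical
  set φ : V → ℝ := fun u => if u ≠ y ∧ (u = x ∨ E x u) then 1 else 0 with hφ
  have hφ_le : ∀ u, φ u ≤ 1 := fun u => by simp only [hφ]; split_ifs <;> norm_num
  have hφ_ge : ∀ u, 0 ≤ φ u := fun u => by simp only [hφ]; split_ifs <;> norm_num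
  have hout_x : ∑ᶠ v ∈ outN E x, φ v = outDeg E x - 1 := by
    rw [finsum_mem_congr rfl fun v hv => show φ v = if v = y then 0 else 1 by
      simp [hφ, mem_outN.1 hv], finsum_mem_outN_ite hlf]
    simp [hxy, sub_eq_add_neg]
  have hout_y : ∑ᶠ v ∈ outN E y, φ v = 0 := finsum_mem_eq_zero_of_forall_eq_zero fun v hv => by
    have hxv : ¬E x v := fun hxv => not_edge_of_inter_outN_eq_empty hdisj hxv hv
    simp [hφ, hxv, show v ≠ x from fun h => hyx (h ▸ hv)]
  have hφx : φ x = 1 := by simp [hφ, ne_of_edge hs hxy]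
  have hφy : φ y = 0 := by simp [hφ]
  have h := le_deg_of_ricciTendsto hlf hs hsc hxy hdeg hflat φ
    (hsc.sub_le_ddist (fun u v => by linarith [hφ_le u, hφ_ge v])
      (fun u v _ => by linarith [hφ_le u, hφ_ge v])) (by simp [hφx, hφy])
  rw [hφx, hφy, hout_x, hout_y] at h
  exact_mod_cast (by linarith : (inDeg E x : ℝ) + outDeg E x ≤ deg E x + 1)

lemma inDeg_lt_deg_of_unique_two_path (hlf : LocFin E) (hs : NoLoops E)
    (hsc : StronglyConnected E) (ha : ∀ a b, E a b → outN E a ∩ outN E b = ∅) {w : V}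
    (hxy : E x y) (hyw : E y w) (hwx : w ≠ x) (hdeg : deg E x = deg E y)
    (hflat : RicciTendsto E x y 0) (huniq : ∀ v, E x v → E v w → v = y) :
    inDeg E y < deg E x := by
  classical
  have hS := inDeg_add_outDeg_eq_of_ricciTendsto hlf hs hxy hdeg hflat
  have hxw : ¬E x w := fun h => not_edge_of_inter_outN_eq_empty (ha x y hxy) h hyw
  set φ : V → ℝ := fun u => if u = w then 0 else if E u w then 1 else 2 with hφ
  have hφ_le : ∀ u, φ u ≤ 2 := fun u => by simp only [hφ]; split_ifs <;> norm_num
  have hφ_ge : ∀ u, 0 ≤ φ u := fun u => by simp only [hφ]; split_ifs <;> norm_num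
  have hlip : ∀ u v, E u v → φ u - φ v ≤ 1 := by
    intro u v huv
    by_cases hvw : v = w
    · subst hvw
      simp [hφ, ne_of_edge hs huv, huv]
    · have : 1 ≤ φ v := by simp only [hφ, if_neg hvw]; split_ifs <;> norm_num
      linarith [hφ_le u]
  have hout_x : ∑ᶠ v ∈ outN E x, φ v = 2 * outDeg E x - 1 := by
    rw [finsum_mem_congr rfl fun v hv => show φ v = if v = y then 1 else 2 by
      have hvw : v ≠ w := fun h => hxw (h ▸ hv)
      by_cases hvy : v = y
      · simp [hφ, hvy, hyw, ne_of_edge hs hyw]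
      · have hvw' : ¬E v w := fun h => hvy (huniq v hv h)
        simp [hφ, hvy, hvw, hvw'], finsum_mem_outN_ite hlf]
    simp [hxy]
    ring
  have hout_y : ∑ᶠ v ∈ outN E y, φ v = 2 * outDeg E y - 2 := by
    rw [finsum_mem_congr rfl fun v hv => show φ v = if v = w then 0 else 2 by
      simp [hφ, not_edge_of_inter_outN_eq_empty (ha y v hv) hyw], finsum_mem_outN_ite hlf]
    simp [hyw]
    ring
  have hφx : φ x = 2 := by simp [hφ, hwx.symm, hxw]
  have hφy : φ y = 1 := by simp [hφ, ne_of_edge hs hyw, hyw]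
  have h := le_deg_of_ricciTendsto hlf hs hsc hxy hdeg hflat φ
    (hsc.sub_le_ddist (fun u v => by linarith [hφ_le u, hφ_ge v]) hlip) (by rw [hφx, hφy]; norm_num)
  rw [hφx, hφy, hout_x, hout_y] at h
  have hS' : (inDeg E x : ℝ) + outDeg E x = inDeg E y + outDeg E y := by exact_mod_cast hS
  exact_mod_cast (by linarith : (inDeg E y : ℝ) + 1 ≤ deg E x)

end TestFunctions

section RicciFlat

variable {E : V → V → Prop} {d : ℕ}

lemma inDeg_add_outDeg_eq_add_recipDeg (hlf : LocFin E) (hreg : ∀ v, deg E v = d) (w : V) :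
    inDeg E w + outDeg E w = d + recipDeg E w := by
  rw [← hreg w, deg_add_recipDeg hlf]

lemma recipDeg_pos (hlf : LocFin E) {a b : V} (hab : E a b) (hba : E b a) : 0 < recipDeg E a :=
  (ncard_pos ((outN_finite hlf a).subset inter_subset_right)).2 ⟨b, hba, hab⟩

lemma two_le_deg_of_not_edge (hlf : LocFin E) {x y : V} (hxy : E x y) (hyx : ¬E y x)
    (hr : 0 < recipDeg E x) : 2 ≤ deg E x := by
  obtain ⟨r, hrx⟩ := nonempty_of_ncard_ne_zero hr.ne'
  have hry : r ≠ y := fun h => hyx (h ▸ hrx.1)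
  calc 2 = ({r, y} : Set V).ncard := (ncard_pair hry).symm
    _ ≤ outDeg E x := ncard_le_ncard (by rintro w (rfl | rfl); exacts [hrx.2, hxy])
        (outN_finite hlf x)
    _ ≤ deg E x := outDeg_le_deg hlf x

lemma outN_eq_singleton (hlf : LocFin E) {x y : V} (hxy : E x y) (h : outDeg E x ≤ 1) :
    outN E x = {y} :=
  (eq_of_subset_of_ncard_le (singleton_subset_iff.2 hxy) (by rwa [ncard_singleton])
    (outN_finite hlf x)).symm

lemma deg_le_one_of_two_cycle (hs : NoLoops E) (hsc : StronglyConnected E) {z p : V}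
    (hz : outN E z = {p}) (hp : outN E p = {z}) : deg E z ≤ 1 := by
  have hall : ∀ w, w ∈ ({z, p} : Set V) :=
    hsc.mem_of_outN_subset (fun a ha => by rcases ha with rfl | rfl <;> simp [hz, hp])
      (x := z) (by simp)
  have hsub : nbhd E z ⊆ {p} := fun w hw => by
    have hwz : w ≠ z := by rintro rfl; rcases hw with h | h <;> exact hs w h
    simpa [hwz] using hall w
  simpa [deg] using ncard_le_ncard hsub (finite_singleton p)

lemma inDeg_add_outDeg_eq_of_ricciFlat (hlf : LocFin E) (hs : NoLoops E)
    (hsc : StronglyConnected E) (hreg : ∀ v, deg E v = d) (hflat : RicciFlat E) (u v : V) :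
    inDeg E u + outDeg E u = inDeg E v + outDeg E v :=
  hsc.eq_of_forall_edge (g := fun w => inDeg E w + outDeg E w) (fun a b hab =>
    (inDeg_add_outDeg_eq_of_ricciTendsto hlf hs hab ((hreg a).trans (hreg b).symm)
      (hflat a b hab)).le) u v

/-- Without reciprocal edges, flatness makes the in-degree grow along every edge. -/
lemma outDeg_eq_of_recipDeg_eq_zero (hlf : LocFin E) (hs : NoLoops E) (hsc : StronglyConnected E)
    (hreg : ∀ v, deg E v = d) (ha : ∀ x y, E x y → outN E x ∩ outN E y = ∅)
    (hflat : RicciFlat E) (h0 : ∀ w, recipDeg E w = 0) (u v : V) : outDeg E u = outDeg E v := by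
  have hmono : ∀ a b, E a b → inDeg E a ≤ inDeg E b := by
    intro a b hab
    have hA := inDeg_add_outDeg_le_of_edge hlf hs hsc hab ((hreg a).trans (hreg b).symm)
      (ha a b hab) (hflat a b hab)
    rw [if_neg fun hba => (recipDeg_pos hlf hab hba).ne' (h0 a), hreg] at hA
    have := inDeg_add_outDeg_eq_add_recipDeg hlf hreg b
    rw [h0] at this
    omega
  have := hsc.eq_of_forall_edge hmono u v
  have := inDeg_add_outDeg_eq_of_ricciFlat hlf hs hsc hreg hflat u v
  omega

/-- With one reciprocal neighbour per vertex, a vertex of maximal in-degree has only reciprocal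
out-edges, hence a single out-neighbour. -/
lemma exists_outN_eq_singleton [Nonempty V] (hlf : LocFin E) (hs : NoLoops E)
    (hsc : StronglyConnected E) (hreg : ∀ v, deg E v = d)
    (ha : ∀ x y, E x y → outN E x ∩ outN E y = ∅) (hflat : RicciFlat E)
    (h1 : ∀ w, recipDeg E w = 1) : ∃ z p, outN E z = {p} ∧ E p z := by
  obtain ⟨z, hz⟩ : ∃ z, ∀ w, inDeg E w ≤ inDeg E z := by
    have hbdd : BddAbove (range (inDeg E)) :=
      ⟨d, by rintro _ ⟨w, rfl⟩; exact hreg w ▸ inDeg_le_deg hlf w⟩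
    obtain ⟨z, hz⟩ := Nat.sSup_mem (range_nonempty _) hbdd
    exact ⟨z, fun w => hz ▸ le_csSup hbdd ⟨w, rfl⟩⟩
  have hrecip : ∀ q, E z q → E q z := by
    intro q hzq
    by_contra hqz
    have hA := inDeg_add_outDeg_le_of_edge hlf hs hsc hzq ((hreg z).trans (hreg q).symm)
      (ha z q hzq) (hflat z q hzq)
    rw [if_neg hqz, hreg] at hA
    have := inDeg_add_outDeg_eq_add_recipDeg hlf hreg q
    have := hz q
    rw [h1] at *
    omega
  obtain ⟨p, hp⟩ := ncard_eq_one.1 (h1 z)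
  have hsub : outN E z ⊆ {p} := fun q hq => hp ▸ ⟨hrecip q hq, hq⟩
  obtain ⟨q, hq⟩ := hsc.exists_edge z
  have hpz : p ∈ recipN E z := hp ▸ rfl
  exact ⟨z, p, (Nonempty.subset_singleton_iff ⟨q, hq⟩).1 hsub, hpz.1⟩

/-- The non-reciprocal out-neighbour `q` of `p` has in-degree `d`, so flatness of `(p, q)` needs
a two-path `p → z → r` to any out-neighbour `r` of `q`; but `z` only points to `p`, and `q ↛ p`. -/
lemma outN_ne_pair (hlf : LocFin E) (hs : NoLoops E) (hsc : StronglyConnected E)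
    (hreg : ∀ v, deg E v = d) (ha : ∀ x y, E x y → outN E x ∩ outN E y = ∅)
    (hflat : RicciFlat E) (h1 : ∀ w, recipDeg E w = 1) {z p q : V} (hz : outN E z = {p})
    (hpz : E p z) (hqz : q ≠ z) : outN E p ≠ {z, q} := by
  intro hp
  have hpq : E p q := show q ∈ outN E p by rw [hp]; simp
  have hqp : ¬E q p := by
    intro hqp
    obtain ⟨r, hr⟩ := ncard_eq_one.1 (h1 p)
    have hz' : z ∈ recipN E p := ⟨show p ∈ outN E z by rw [hz]; rfl, hpz⟩
    have hq' : q ∈ recipN E p := ⟨hqp, hpq⟩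
    rw [hr] at hz' hq'
    exact hqz (hq'.trans hz'.symm)
  have hA := inDeg_add_outDeg_le_of_edge hlf hs hsc hpq ((hreg p).trans (hreg q).symm)
    (ha p q hpq) (hflat p q hpq)
  rw [if_neg hqp, hreg] at hA
  have hSp := inDeg_add_outDeg_eq_add_recipDeg hlf hreg p
  have hSq := inDeg_add_outDeg_eq_add_recipDeg hlf hreg q
  rw [h1, outDeg, hp, ncard_pair hqz.symm] at hSp
  rw [h1] at hSq
  obtain ⟨r, hqr⟩ := hsc.exists_edge q
  have hlt := inDeg_lt_deg_of_unique_two_path hlf hs hsc ha hpq hqr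
    (fun hrp => hqp (hrp ▸ hqr)) ((hreg p).trans (hreg q).symm) (hflat p q hpq) fun v hpv hvr => by
      replace hpv : v ∈ outN E p := hpv
      rw [hp] at hpv
      rcases hpv with rfl | rfl
      · have : r ∈ outN E v := hvr
        rw [hz] at this
        exact absurd (this ▸ hqr) hqp
      · rfl
  rw [hreg] at hlt
  omega

lemma false_of_recipDeg_eq_one (hlf : LocFin E) (hs : NoLoops E) (hsc : StronglyConnected E)
    (hreg : ∀ v, deg E v = d) (ha : ∀ x y, E x y → outN E x ∩ outN E y = ∅)
    (hflat : RicciFlat E) (h1 : ∀ w, recipDeg E w = 1) {x y : V} (hxy : E x y) (hyx : ¬E y x) :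
    False := by
  have hd := hreg x ▸ two_le_deg_of_not_edge hlf hxy hyx (h1 x ▸ one_pos)
  have : Nonempty V := ⟨x⟩
  obtain ⟨z, p, hz, hpz⟩ := exists_outN_eq_singleton hlf hs hsc hreg ha hflat h1
  have hzp : E z p := show p ∈ outN E z by rw [hz]; rfl
  have hA := inDeg_add_outDeg_le_of_edge hlf hs hsc hzp ((hreg z).trans (hreg p).symm)
    (ha z p hzp) (hflat z p hzp)
  rw [if_pos hpz, hreg] at hA
  have hSz := inDeg_add_outDeg_eq_add_recipDeg hlf hreg z
  rw [outDeg, hz, ncard_singleton, h1] at hSz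
  rcases (by omega : outDeg E p ≤ 1 ∨ outDeg E p = 2) with hle | h2
  · have := hreg z ▸ deg_le_one_of_two_cycle hs hsc hz (outN_eq_singleton hlf hpz hle)
    omega
  · obtain ⟨a, b, hab, hp⟩ := ncard_eq_two.1 h2
    have hzp' : z ∈ outN E p := hpz
    rw [hp] at hzp'
    rcases hzp' with rfl | rfl
    · exact outN_ne_pair hlf hs hsc hreg ha hflat h1 hz hpz hab.symm hp
    · exact outN_ne_pair hlf hs hsc hreg ha hflat h1 hz hpz hab (hp.trans (pair_comm _ _))

end RicciFlat

theorem stmt_11 (E : V → V → Prop) (hlf : LocFin E) (hs : NoLoops E) (hsc : StronglyConnected E)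
    (d : ℕ) (hreg : ∀ v : V, deg E v = d)
    (ha : ∀ x y : V, E x y → outN E x ∩ outN E y = ∅)
    (h : RicciFlat E) :
    ∀ u v : V, outDeg E u = outDeg E v := by
  by_cases hsymm : ∀ a b, E a b → E b a
  · intro u v
    rw [outDeg_eq_deg_of_symm hsymm, outDeg_eq_deg_of_symm hsymm, hreg, hreg]
  push Not at hsymm
  obtain ⟨x, y, hxy, hyx⟩ := hsymm
  have hB := inDeg_add_outDeg_le_succ_of_not_edge hlf hs hsc hxy hyx
    ((hreg x).trans (hreg y).symm) (ha x y hxy) (h x y hxy)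
  have hrecip : ∀ w, recipDeg E w = recipDeg E x := fun w => by
    have := inDeg_add_outDeg_eq_add_recipDeg hlf hreg w
    have := inDeg_add_outDeg_eq_add_recipDeg hlf hreg x
    have := inDeg_add_outDeg_eq_of_ricciFlat hlf hs hsc hreg h w x
    omega
  have := inDeg_add_outDeg_eq_add_recipDeg hlf hreg x
  rw [hreg] at hB
  rcases (by omega : recipDeg E x = 0 ∨ recipDeg E x = 1) with h0 | h1
  · exact outDeg_eq_of_recipDeg_eq_zero hlf hs hsc hreg ha h fun w => (hrecip w).trans h0
  · exact (false_of_recipDeg_eq_one hlf hs hsc hreg ha h (fun w => (hrecip w).trans h1) hxy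
      hyx).elim
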